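/- arXiv:1209.3575 — 5 statements merged into one kernel-verified Lean document; each statement's English description precedes it below -/
import Mathlib

section
/- Let M be a matroid of rank r on a finite set E and let E = E_1 ∪ E_2 be a good 2-partition of M with associated integers a_1, a_2 (so 0 < a_i < r(M|E_i) and a_1 + a_2 = r). Then the families B(M_1) = {B a base of M : |B ∩ E_1| ≤ a_1} and B(M_2) = {B a base of M : |B ∩ E_2| ≤ a_2} are each the collection of bases of a matroid on E. -/
/-!
Call an independent set `I` of `M` admissible if `|I ∩ E₁| ≤ a₁`. Admissible sets satisfy the
augmentation axiom: if `|I| < |J|` and `|I ∩ E₁| < a₁`, augment `I` from `J` in `M`; if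
`|I ∩ E₁| = a₁`, then `J ∩ E₂` is not contained in the closure of `I`, because otherwise (P2)
applied to `I ∩ E₁` and a subset of `J ∩ E₂` of size `|I ∩ E₂| + 1 ≤ a₂` would give an independent
set larger than `I` inside that closure. So the admissible sets are the independent sets of a matroid.
By (P2) some base of `M` is admissible, and hence the bases of this matroid are exactly the
admissible bases of `M`. The statement for `E₂` is the same one with the two sides exchanged.
-/

open Matroid Set

/-- The rank of a matroid: the supremum of the cardinalities of its independent sets. -/
noncomputable def mrk {α : Type*} (M : Matroid α) : ℕ :=
  sSup {n : ℕ | ∃ I, M.Indep I ∧ I.ncard = n}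

/-- `ℬ` is the collection of bases of a matroid on the ground set `E`. -/
def IsBaseCollection {α : Type*} (E : Set α) (ℬ : Set (Set α)) : Prop :=
  ∃ N : Matroid α, N.E = E ∧ ∀ B, N.IsBase B ↔ B ∈ ℬ

/-- A good 2-partition of a rank-`r` matroid `M`: the ground set is partitioned as
`E₁ ∪ E₂` with `r(M|Eᵢ) > 1`, integers `0 < aᵢ < r(M|Eᵢ)`, `(P1)` `r = a₁ + a₂`, and `(P2)`
unions of small independent sets of the two restrictions are independent in `M`. -/
def IsGoodPartition2 {α : Type*} (M : Matroid α) (r : ℕ) (E₁ E₂ : Set α) (a₁ a₂ : ℕ) : Prop :=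
  E₁ ∪ E₂ = M.E ∧ Disjoint E₁ E₂ ∧
  1 < mrk (M ↾ E₁) ∧ 1 < mrk (M ↾ E₂) ∧
  0 < a₁ ∧ a₁ < mrk (M ↾ E₁) ∧ 0 < a₂ ∧ a₂ < mrk (M ↾ E₂) ∧
  r = a₁ + a₂ ∧
  ∀ X Y : Set α, (M ↾ E₁).Indep X → X.ncard ≤ a₁ →
    (M ↾ E₂).Indep Y → Y.ncard ≤ a₂ → M.Indep (X ∪ Y)

namespace Matroid

variable {α : Type*} {M N : Matroid α} {I J B B₀ : Set α}

lemma IsBase.ncard_eq_mrk [M.RankFinite] (hB : M.IsBase B) : B.ncard = mrk M := by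
  refine (IsGreatest.csSup_eq (s := {n | ∃ I, M.Indep I ∧ I.ncard = n})
    ⟨⟨B, hB.indep, rfl⟩, ?_⟩).symm
  rintro _ ⟨I, hI, rfl⟩
  obtain ⟨B', hB', hIB'⟩ := hI.exists_isBase_superset
  exact (ncard_le_ncard hIB' hB'.finite).trans (hB'.ncard_eq_ncard_of_isBase hB).le

lemma Indep.ncard_le_mrk [M.RankFinite] (hI : M.Indep I) : I.ncard ≤ mrk M := by
  obtain ⟨B, hB, hIB⟩ := hI.exists_isBase_superset
  exact hB.ncard_eq_mrk ▸ ncard_le_ncard hIB hB.finite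

lemma Indep.isBase_of_mrk_le_ncard [M.RankFinite] (hI : M.Indep I) (h : mrk M ≤ I.ncard) :
    M.IsBase I := by
  obtain ⟨B, hB, hIB⟩ := hI.exists_isBase_superset
  rwa [eq_of_subset_of_ncard_le hIB (hB.ncard_eq_mrk ▸ h) hB.finite]

lemma exists_indep_ncard_eq_of_le_mrk [M.RankFinite] {n : ℕ} (hn : n ≤ mrk M) :
    ∃ I, M.Indep I ∧ I.ncard = n := by
  obtain ⟨B, hB⟩ := M.exists_isBase
  obtain ⟨I, hIB, hI⟩ := exists_subset_card_eq (hB.ncard_eq_mrk ▸ hn)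
  exact ⟨I, hB.indep.subset hIB, hI⟩

lemma Indep.ncard_le_of_subset_closure [M.RankFinite] (hI : M.Indep I) (hJ : M.Indep J)
    (hJI : J ⊆ M.closure I) : J.ncard ≤ I.ncard := by
  have h : J.encard ≤ I.encard := by
    simpa only [eRk_closure_eq, hI.eRk_eq_encard] using hJ.encard_le_eRk_of_subset hJI
  rwa [← hJ.finite.cast_ncard_eq, ← hI.finite.cast_ncard_eq, Nat.cast_le] at h

lemma isBase_iff_of_indep_imp [M.RankFinite] (hNM : ∀ I, N.Indep I → M.Indep I)
    (hB₀ : M.IsBase B₀) (hB₀N : N.Indep B₀) : N.IsBase B ↔ M.IsBase B ∧ N.Indep B := by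
  have hbase_of : ∀ B, M.IsBase B → N.Indep B → N.IsBase B := fun B hMB hNB =>
    hNB.isBase_of_maximal fun J hJ hBJ => hMB.eq_of_subset_indep (hNM J hJ) hBJ
  refine ⟨fun hB => ⟨?_, hB.indep⟩, fun hB => hbase_of B hB.1 hB.2⟩
  have hcard := hB.ncard_eq_ncard_of_isBase (hbase_of B₀ hB₀ hB₀N)
  exact (hNM B hB.indep).isBase_of_mrk_le_ncard (hcard ▸ hB₀.ncard_eq_mrk.ge)

end Matroid

namespace IsGoodPartition2

variable {α : Type*} {M : Matroid α} {r a₁ a₂ : ℕ} {E₁ E₂ I J : Set α}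

lemma symm (h : IsGoodPartition2 M r E₁ E₂ a₁ a₂) : IsGoodPartition2 M r E₂ E₁ a₂ a₁ := by
  obtain ⟨hE, hdisj, h₁, h₂, ha₁, ha₁', ha₂, ha₂', hr, hP2⟩ := h
  refine ⟨union_comm E₂ E₁ ▸ hE, hdisj.symm, h₂, h₁, ha₂, ha₂', ha₁, ha₁', by omega,
    fun X Y hX hXa hY hYa => ?_⟩
  rw [union_comm]
  exact hP2 Y X hY hYa hX hXa

lemma ncard_inter_add_ncard_inter (h : IsGoodPartition2 M r E₁ E₂ a₁ a₂) (hI : I.Finite)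
    (hIE : I ⊆ M.E) : (I ∩ E₁).ncard + (I ∩ E₂).ncard = I.ncard := by
  obtain ⟨hE, hdisj, -⟩ := h
  rw [← ncard_union_eq (hdisj.mono inter_subset_right inter_subset_right)
    (hI.subset inter_subset_left) (hI.subset inter_subset_left),
    ← inter_union_distrib_left, hE, inter_eq_self_of_subset_left hIE]

lemma indep_union [M.RankFinite] (h : IsGoodPartition2 M r E₁ E₂ a₁ a₂) {X Y : Set α}
    (hX : M.Indep X) (hXE : X ⊆ E₁) (hXa : X.ncard ≤ a₁)
    (hY : M.Indep Y) (hYE : Y ⊆ E₂) (hYa : Y.ncard ≤ a₂) :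
    M.Indep (X ∪ Y) ∧ (X ∪ Y).ncard = X.ncard + Y.ncard := by
  obtain ⟨-, hdisj, -, -, -, -, -, -, -, hP2⟩ := h
  exact ⟨hP2 X Y (restrict_indep_iff.2 ⟨hX, hXE⟩) hXa (restrict_indep_iff.2 ⟨hY, hYE⟩) hYa,
    ncard_union_eq (hdisj.mono hXE hYE) hX.finite hY.finite⟩

lemma exists_isBase_ncard_inter_le [M.RankFinite] (h : IsGoodPartition2 M r E₁ E₂ a₁ a₂)
    (hr : mrk M = r) : ∃ B, M.IsBase B ∧ (B ∩ E₁).ncard ≤ a₁ := by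
  have ⟨_, hdisj, _, _, _, ha₁, _, ha₂, hr₁₂, _⟩ := h
  obtain ⟨X, hX, hXa⟩ := exists_indep_ncard_eq_of_le_mrk ha₁.le
  obtain ⟨Y, hY, hYa⟩ := exists_indep_ncard_eq_of_le_mrk ha₂.le
  obtain ⟨hXM, hXE⟩ := restrict_indep_iff.1 hX
  obtain ⟨hYM, hYE⟩ := restrict_indep_iff.1 hY
  obtain ⟨hXY, hcard⟩ := h.indep_union hXM hXE hXa.le hYM hYE hYa.le
  refine ⟨X ∪ Y, hXY.isBase_of_mrk_le_ncard (by omega), ?_⟩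
  have hXY₁ : (X ∪ Y) ∩ E₁ ⊆ X := by
    rintro x ⟨hx | hx, hx₁⟩
    exacts [hx, (hdisj.notMem_of_mem_left hx₁ (hYE hx)).elim]
  exact (ncard_le_ncard hXY₁ hXM.finite).trans hXa.le

lemma exists_insert_indep_of_ncard_inter_eq [M.RankFinite] (h : IsGoodPartition2 M r E₁ E₂ a₁ a₂)
    (hr : mrk M = r) (hI : M.Indep I) (hI₁ : (I ∩ E₁).ncard = a₁) (hJ : M.Indep J)
    (hJ₁ : (J ∩ E₁).ncard ≤ a₁) (hIJ : I.ncard < J.ncard) :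
    ∃ e ∈ J ∩ E₂, e ∉ I ∧ M.Indep (insert e I) := by
  have ⟨_, _, _, _, _, _, _, _, hr₁₂, _⟩ := h
  have hIsplit := h.ncard_inter_add_ncard_inter hI.finite hI.subset_ground
  have hJsplit := h.ncard_inter_add_ncard_inter hJ.finite hJ.subset_ground
  have hJr := hJ.ncard_le_mrk
  have hcl : ¬ J ∩ E₂ ⊆ M.closure I := by
    intro hJcl
    obtain ⟨Y, hYJ, hYcard⟩ :=
      exists_subset_card_eq (s := J ∩ E₂) (n := (I ∩ E₂).ncard + 1) (by omega)
    obtain ⟨hZ, hZcard⟩ := h.indep_union (hI.subset inter_subset_left) inter_subset_right hI₁.le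
      (hJ.subset (hYJ.trans inter_subset_left)) (hYJ.trans inter_subset_right) (by omega)
    have hZcl : I ∩ E₁ ∪ Y ⊆ M.closure I :=
      union_subset (inter_subset_left.trans (M.subset_closure I)) (hYJ.trans hJcl)
    have := hI.ncard_le_of_subset_closure hZ hZcl
    omega
  obtain ⟨e, he, hecl⟩ := not_subset.1 hcl
  have heI : e ∉ I := fun heI => hecl (M.subset_closure I hI.subset_ground heI)
  exact ⟨e, he, heI, (hI.insert_indep_iff_of_notMem heI).2 ⟨hJ.subset_ground he.1, hecl⟩⟩

lemma augment [M.RankFinite] (h : IsGoodPartition2 M r E₁ E₂ a₁ a₂) (hr : mrk M = r)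
    (hI : M.Indep I) (hI₁ : (I ∩ E₁).ncard ≤ a₁) (hJ : M.Indep J) (hJ₁ : (J ∩ E₁).ncard ≤ a₁)
    (hIJ : I.ncard < J.ncard) :
    ∃ e ∈ J, e ∉ I ∧ M.Indep (insert e I) ∧ (insert e I ∩ E₁).ncard ≤ a₁ := by
  obtain hlt | heq := hI₁.lt_or_eq
  · have hIJ' : I.encard < J.encard := by
      rwa [← hI.finite.cast_ncard_eq, ← hJ.finite.cast_ncard_eq, Nat.cast_lt]
    obtain ⟨e, ⟨heJ, heI⟩, hins⟩ := hI.augment hJ hIJ'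
    refine ⟨e, heJ, heI, hins, ?_⟩
    have hsub : insert e I ∩ E₁ ⊆ insert e (I ∩ E₁) := by
      rw [insert_inter_distrib]
      exact inter_subset_inter_right _ (subset_insert e E₁)
    calc (insert e I ∩ E₁).ncard ≤ (insert e (I ∩ E₁)).ncard :=
          ncard_le_ncard hsub ((hI.finite.inter_of_left E₁).insert e)
      _ ≤ a₁ := (ncard_insert_le e _).trans hlt
  · obtain ⟨e, ⟨heJ, heE₂⟩, heI, hins⟩ :=
      h.exists_insert_indep_of_ncard_inter_eq hr hI heq hJ hJ₁ hIJ
    obtain ⟨-, hdisj, -⟩ := h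
    exact ⟨e, heJ, heI, hins, by rwa [insert_inter_of_notMem (hdisj.notMem_of_mem_right heE₂)]⟩

lemma exists_matroid_indep_iff [M.Finite] (h : IsGoodPartition2 M r E₁ E₂ a₁ a₂)
    (hr : mrk M = r) :
    ∃ N : Matroid α, N.E = M.E ∧ ∀ I, N.Indep I ↔ M.Indep I ∧ (I ∩ E₁).ncard ≤ a₁ := by
  refine ⟨(IndepMatroid.ofFinite M.ground_finite (fun I => M.Indep I ∧ (I ∩ E₁).ncard ≤ a₁)
    ⟨M.empty_indep, by simp⟩ (fun I J hJ hIJ => ⟨hJ.1.subset hIJ, ?_⟩)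
    (fun I J hI hJ hIJ => h.augment hr hI.1 hI.2 hJ.1 hJ.2 hIJ)
    (fun I hI => hI.1.subset_ground)).matroid, rfl, fun I => Iff.rfl⟩
  exact (ncard_le_ncard (inter_subset_inter_left E₁ hIJ)
    (hJ.1.finite.inter_of_left E₁)).trans hJ.2

theorem isBaseCollection [M.Finite] (h : IsGoodPartition2 M r E₁ E₂ a₁ a₂) (hr : mrk M = r) :
    IsBaseCollection M.E {B | M.IsBase B ∧ (B ∩ E₁).ncard ≤ a₁} := by
  obtain ⟨N, hNE, hNI⟩ := h.exists_matroid_indep_iff hr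
  obtain ⟨B₀, hB₀, hB₀₁⟩ := h.exists_isBase_ncard_inter_le hr
  refine ⟨N, hNE, fun B => ?_⟩
  rw [isBase_iff_of_indep_imp (fun I hI => ((hNI I).1 hI).1) hB₀ ((hNI B₀).2 ⟨hB₀.indep, hB₀₁⟩),
    hNI]
  exact ⟨fun hB => ⟨hB.1, hB.2.2⟩, fun hB => ⟨hB.1, hB.1.indep, hB.2⟩⟩

end IsGoodPartition2

/-- for a good 2-partition of `M` with integers `a₁, a₂`, the families
`{B base of M : |B ∩ E₁| ≤ a₁}` and `{B base of M : |B ∩ E₂| ≤ a₂}` are each the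
collection of bases of a matroid on `E`. -/
theorem statement0 {α : Type*} (M : Matroid α) (hfin : M.E.Finite) (r : ℕ)
    (hrank : mrk M = r) (E₁ E₂ : Set α) (a₁ a₂ : ℕ)
    (hgood : IsGoodPartition2 M r E₁ E₂ a₁ a₂) :
    IsBaseCollection M.E {B | M.IsBase B ∧ (B ∩ E₁).ncard ≤ a₁} ∧
    IsBaseCollection M.E {B | M.IsBase B ∧ (B ∩ E₂).ncard ≤ a₂} := by
  have : M.Finite := ⟨hfin⟩
  exact ⟨hgood.isBaseCollection hrank, hgood.symm.isBaseCollection hrank⟩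
end

section
/- Let t ≥ 2, let M be a matroid of rank r on E, and let E = E_1 ∪ ⋯ ∪ E_t be a good t-partition of M with associated integers a_1,…,a_t. Define B(M_1) = {B a base of M : |B ∩ E_1| ≤ a_1}, and for each 2 ≤ j ≤ t define B(M_j) = {B a base of M : |B ∩ (E_1 ∪ ⋯ ∪ E_h)| ≥ a_1 + ⋯ + a_h for every 1 ≤ h ≤ j−1, and |B ∩ (E_1 ∪ ⋯ ∪ E_j)| ≤ a_1 + ⋯ + a_j}. Then for each 1 ≤ j ≤ t, B(M_j) is the collection of bases of a matroid on E. -/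
open Matroid Set

/-- The union of the blocks `E_i` with `lo ≤ i < hi` (`i` is a 0-based index, so the paper's
`E_1 ∪ ⋯ ∪ E_j` is `blockU E 0 j`). -/
def blockU {α : Type*} {t : ℕ} (E : Fin t → Set α) (lo hi : ℕ) : Set α :=
  ⋃ i ∈ {i : Fin t | lo ≤ (i : ℕ) ∧ (i : ℕ) < hi}, E i

/-- The sum of the integers `a_i` with `lo ≤ i < hi` (0-based), so the paper's
`a_1 + ⋯ + a_j` is `blockSum a 0 j`. -/
def blockSum {t : ℕ} (a : Fin t → ℕ) (lo hi : ℕ) : ℕ :=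
  ∑ i ∈ Finset.univ.filter (fun i : Fin t => lo ≤ (i : ℕ) ∧ (i : ℕ) < hi), a i

/-- A good `t`-partition of a rank-`r` matroid `M`: the ground set is partitioned into blocks
`E_1, …, E_t` (here indexed by `Fin t`) with `r(M|E_i) > 1`, together with integers
`0 < a_i < r(M|E_i)` such that `(P1)` `r = a_1 + ⋯ + a_t` and conditions `(P2a)`,`(P2b)` hold. -/
def IsGoodPartition {α : Type*} {t : ℕ} (M : Matroid α) (r : ℕ)
    (E : Fin t → Set α) (a : Fin t → ℕ) : Prop :=
  (⋃ i, E i) = M.E ∧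
  Pairwise (Function.onFun Disjoint E) ∧
  (∀ i, 1 < mrk (M ↾ E i)) ∧
  (∀ i, 0 < a i ∧ a i < mrk (M ↾ E i)) ∧
  r = (∑ i, a i) ∧
  (∀ j : ℕ, 1 ≤ j → j ≤ t - 1 → ∀ X Y : Set α,
    (M ↾ blockU E 0 j).Indep X → X.ncard ≤ blockSum a 0 j →
    (M ↾ blockU E j t).Indep Y → Y.ncard ≤ blockSum a j t →
    M.Indep (X ∪ Y)) ∧
  (∀ j k : ℕ, 1 ≤ j → j < k → k ≤ t - 1 → ∀ X Y Z : Set α,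
    (M ↾ blockU E 0 j).Indep X → X.ncard ≤ blockSum a 0 j →
    (M ↾ blockU E j k).Indep Y → Y.ncard ≤ blockSum a j k →
    (M ↾ blockU E k t).Indep Z → Z.ncard ≤ blockSum a k t →
    M.Indep (X ∪ Y ∪ Z))

/-- The family `ℬ(M_j)` from the paper : bases `B` of `M` with
`|B ∩ (E_1 ∪ ⋯ ∪ E_h)| ≥ a_1 + ⋯ + a_h` for every `1 ≤ h ≤ j - 1`, and
`|B ∩ (E_1 ∪ ⋯ ∪ E_j)| ≤ a_1 + ⋯ + a_j`. -/
def BFam {α : Type*} {t : ℕ} (M : Matroid α) (E : Fin t → Set α) (a : Fin t → ℕ)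
    (j : ℕ) : Set (Set α) :=
  {B | M.IsBase B ∧
    (∀ h : ℕ, 1 ≤ h → h ≤ j - 1 → blockSum a 0 h ≤ (B ∩ blockU E 0 h).ncard) ∧
    (B ∩ blockU E 0 j).ncard ≤ blockSum a 0 j}

/-!
Every family `ℬ(M_j)` is nonempty: choosing an independent set of size `a_i` in each block `E_i`
and gluing these with (P2a) gives a base `B` with `|B ∩ (E_1 ∪ ⋯ ∪ E_h)| = a_1 + ⋯ + a_h` for all
`h`. For the exchange axiom take `B, B'` in the family and `e ∈ B \ B'`, and write `U_h` for
`E_1 ∪ ⋯ ∪ E_h`. An ordinary basis exchange `B - e + f` can only violate a constraint that `B`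
meets with equality. If `e` lies in a tight prefix `U_m` with `m < j` (take `m` minimal), augment
`(B ∩ U_m) - e` from `B' ∩ U_m`, which is at least as large; if the upper constraint at `j` is
tight and `e ∉ U_j`, augment `(B \ U_j) - e` from `B' \ U_j` instead. In both cases (P2a) glues the
augmented half with the untouched half of `B` to an independent set of size `r`, and since `e`
and `f` lie on the same side of the tight prefix, no constraint breaks.
-/

open Function

section Rank

variable {α : Type*} {M : Matroid α} [M.RankFinite] {B I : Set α}

lemma Matroid.IsBase.ncard_eq_mrk_s2 (hB : M.IsBase B) : B.ncard = mrk M := by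
  refine (IsGreatest.csSup_eq (s := {n | ∃ I, M.Indep I ∧ I.ncard = n})
    ⟨⟨B, hB.indep, rfl⟩, ?_⟩).symm
  rintro _ ⟨I, hI, rfl⟩
  obtain ⟨B', hB', hIB'⟩ := hI.exists_isBase_superset
  exact (ncard_le_ncard hIB' hB'.finite).trans (hB'.ncard_eq_ncard_of_isBase hB).le

lemma Matroid.Indep.isBase_of_mrk_le (hI : M.Indep I) (h : mrk M ≤ I.ncard) : M.IsBase I := by
  obtain ⟨B, hB, hIB⟩ := hI.exists_isBase_superset
  rwa [eq_of_subset_of_ncard_le hIB (hB.ncard_eq_mrk_s2.trans_le h) hB.finite]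

lemma Matroid.exists_indep_ncard_eq {n : ℕ} (hn : n ≤ mrk M) : ∃ I, M.Indep I ∧ I.ncard = n := by
  obtain ⟨B, hB⟩ := M.exists_isBase
  obtain ⟨I, hIB, hI⟩ := exists_subset_card_eq (hB.ncard_eq_mrk_s2 ▸ hn)
  exact ⟨I, hB.indep.subset hIB, hI⟩

end Rank

section Exchange

variable {α : Type*} {B U : Set α} {e f : α}

open Classical in
lemma ncard_insert_inter (hf : f ∉ B) (hB : B.Finite) :
    (insert f B ∩ U).ncard = (B ∩ U).ncard + if f ∈ U then 1 else 0 := by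
  split_ifs with hfU
  · rw [insert_inter_of_mem hfU, ncard_insert_of_notMem (fun h => hf h.1) (hB.inter_of_left U)]
  · rw [insert_inter_of_notMem hfU, add_zero]

open Classical in
lemma ncard_insert_sdiff_inter_add (hB : B.Finite) (he : e ∈ B) (hf : f ∉ B) :
    (insert f (B \ {e}) ∩ U).ncard + (if e ∈ U then 1 else 0) =
      (B ∩ U).ncard + if f ∈ U then 1 else 0 := by
  have heS : e ∉ insert f (B \ {e}) := by
    rintro (rfl | ⟨-, he'⟩)
    · exact hf he
    · exact he' rfl
  rw [← ncard_insert_inter heS ((hB.sdiff).insert f), ← ncard_insert_inter hf hB, insert_comm,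
    insert_sdiff_singleton, insert_eq_of_mem he]

lemma Matroid.Indep.exists_insert_sdiff_inter_indep {M : Matroid α} [M.RankFinite] {B' : Set α}
    (hB : M.Indep B) (hB' : M.Indep B') (he : e ∈ B ∩ U) (heB' : e ∉ B')
    (hU : (B ∩ U).ncard ≤ (B' ∩ U).ncard) :
    ∃ f ∈ B' \ B, f ∈ U ∧ M.Indep (insert f (B \ {e}) ∩ U) := by
  have hlt : ((B ∩ U) \ {e}).encard < (B' ∩ U).encard := by
    rw [← (hB.finite.inter_of_left U).sdiff.cast_ncard_eq,
      ← (hB'.finite.inter_of_left U).cast_ncard_eq, ncard_sdiff_singleton_of_mem he]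
    have : 0 < (B ∩ U).ncard := (ncard_pos (hB.finite.inter_of_left U)).2 ⟨e, he⟩
    exact_mod_cast (by omega : (B ∩ U).ncard - 1 < (B' ∩ U).ncard)
  obtain ⟨f, ⟨⟨hfB', hfU⟩, hfX⟩, hind⟩ :=
    (hB.subset (sdiff_subset.trans inter_subset_left)).augment (hB'.inter_right U) hlt
  have hfB : f ∉ B := fun hfB => hfX ⟨⟨hfB, hfU⟩, fun h => heB' (h ▸ hfB')⟩
  refine ⟨f, ⟨hfB', hfB⟩, hfU, ?_⟩
  rwa [insert_inter_of_mem hfU, ← inter_sdiff_right_comm]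

end Exchange

section Blocks

variable {α : Type*} {t : ℕ} {E I : Fin t → Set α} {a : Fin t → ℕ} {lo hi j k : ℕ}

@[simp]
lemma mem_blockU {x : α} : x ∈ blockU E lo hi ↔ ∃ i : Fin t, (lo ≤ i ∧ (i : ℕ) < hi) ∧ x ∈ E i := by
  simp [blockU]

lemma subset_blockU {i : Fin t} (hlo : lo ≤ i) (hhi : (i : ℕ) < hi) : E i ⊆ blockU E lo hi :=
  fun _ hx => mem_blockU.2 ⟨i, ⟨hlo, hhi⟩, hx⟩

lemma blockU_subset_blockU (hIE : ∀ i, I i ⊆ E i) : blockU I lo hi ⊆ blockU E lo hi := by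
  simp only [subset_def, mem_blockU]
  exact fun _ ⟨i, hi, hx⟩ => ⟨i, hi, hIE i hx⟩

lemma blockU_mono_right {hi' : ℕ} (h : hi ≤ hi') : blockU E lo hi ⊆ blockU E lo hi' := by
  simp only [subset_def, mem_blockU]
  exact fun _ ⟨i, ⟨hlo, hhi⟩, hx⟩ => ⟨i, ⟨hlo, hhi.trans_le h⟩, hx⟩

@[simp]
lemma blockU_self : blockU E lo lo = ∅ := by
  ext; simp only [mem_blockU, mem_empty_iff_false, iff_false]; omega

lemma blockU_succ (hk : k < t) : blockU E 0 (k + 1) = blockU E 0 k ∪ E ⟨k, hk⟩ := by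
  ext x
  simp only [mem_blockU, mem_union, zero_le, true_and]
  constructor
  · rintro ⟨i, hi, hx⟩
    rcases Nat.lt_succ_iff_lt_or_eq.1 hi with hi | rfl
    · exact Or.inl ⟨i, hi, hx⟩
    · exact Or.inr hx
  · rintro (⟨i, hi, hx⟩ | hx)
    · exact ⟨i, hi.trans k.lt_succ_self, hx⟩
    · exact ⟨_, k.lt_succ_self, hx⟩

lemma sdiff_blockU_subset {S : Set α} (hS : S ⊆ ⋃ i, E i) : S \ blockU E 0 j ⊆ blockU E j t := by
  rintro x ⟨hxS, hxj⟩
  obtain ⟨i, hx⟩ := mem_iUnion.1 (hS hxS)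
  exact subset_blockU (not_lt.1 fun hi => hxj (subset_blockU (Nat.zero_le _) hi hx)) i.isLt hx

lemma disjoint_blockU (hd : Pairwise (Disjoint on E)) {i : Fin t} (hk : k ≤ i) :
    Disjoint (blockU E 0 k) (E i) := by
  simp only [disjoint_left, mem_blockU]
  rintro x ⟨i', ⟨-, hi'⟩, hx'⟩ hx
  exact disjoint_left.1 (hd (Fin.ne_of_lt (hi'.trans_le hk))) hx' hx

lemma blockU_inter_blockU (hd : Pairwise (Disjoint on E)) (hIE : ∀ i, I i ⊆ E i) :
    blockU I 0 t ∩ blockU E 0 j = blockU I 0 j := by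
  ext x
  simp only [mem_inter_iff, mem_blockU, zero_le, true_and]
  constructor
  · rintro ⟨⟨i, -, hx⟩, i', hi', hx'⟩
    obtain rfl : i = i' := by_contra fun hne => disjoint_left.1 (hd hne) (hIE i hx) hx'
    exact ⟨i, hi', hx⟩
  · exact fun ⟨i, hi, hx⟩ => ⟨⟨i, i.isLt, hx⟩, i, hi, hIE i hx⟩

lemma blockU_subset_iUnion : blockU E lo hi ⊆ ⋃ i, E i :=
  iUnion₂_subset fun i _ => subset_iUnion E i

lemma blockSum_succ (hk : k < t) : blockSum a 0 (k + 1) = blockSum a 0 k + a ⟨k, hk⟩ := by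
  have split : ∀ i : Fin t, (if 0 ≤ (i : ℕ) ∧ (i : ℕ) < k + 1 then a i else 0) =
      (if 0 ≤ (i : ℕ) ∧ (i : ℕ) < k then a i else 0) +
        if (⟨k, hk⟩ : Fin t) = i then a i else 0 := by
    intro i; simp only [Fin.ext_iff]; split_ifs <;> omega
  simp only [blockSum, Finset.sum_filter, split, Finset.sum_add_distrib, Finset.sum_ite_eq,
    Finset.mem_univ, if_true]

lemma blockSum_add_blockSum : blockSum a 0 j + blockSum a j t = ∑ i, a i := by
  simp only [blockSum, Finset.sum_filter, ← Finset.sum_add_distrib]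
  refine Finset.sum_congr rfl fun i _ => ?_
  split_ifs <;> omega

lemma le_blockSum (hk : k < t) : a ⟨k, hk⟩ ≤ blockSum a k t :=
  Finset.single_le_sum (fun _ _ => Nat.zero_le _) (by simp)

lemma ncard_blockU (hd : Pairwise (Disjoint on I)) (hfin : ∀ i, (I i).Finite) (hk : k ≤ t) :
    (blockU I 0 k).ncard = blockSum (fun i => (I i).ncard) 0 k := by
  induction k with
  | zero => simp [blockSum]
  | succ k ih =>
    rw [blockU_succ hk, blockSum_succ hk, ncard_union_eq (disjoint_blockU hd (i := ⟨k, hk⟩) le_rfl)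
      ((finite_iUnion hfin).subset blockU_subset_iUnion) (hfin _), ih (by omega)]

end Blocks

section GoodPartition

variable {α : Type*} {t : ℕ} {M : Matroid α} {E I : Fin t → Set α} {a : Fin t → ℕ}

/-- Condition (P2a) of a good partition. -/
def PrefixSuffixIndep (M : Matroid α) (E : Fin t → Set α) (a : Fin t → ℕ) : Prop :=
  ∀ j : ℕ, 1 ≤ j → j ≤ t - 1 → ∀ X Y : Set α,
    (M ↾ blockU E 0 j).Indep X → X.ncard ≤ blockSum a 0 j →
    (M ↾ blockU E j t).Indep Y → Y.ncard ≤ blockSum a j t →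
    M.Indep (X ∪ Y)

lemma PrefixSuffixIndep.indep_of_inter_sdiff (hP : PrefixSuffixIndep M E a)
    (hE : M.E ⊆ ⋃ i, E i) {j : ℕ} (hj : 1 ≤ j) (hjt : j ≤ t - 1) {S : Set α} (hS : S ⊆ M.E)
    (hSfin : S.Finite) (hScard : S.ncard = ∑ i, a i)
    (hin : M.Indep (S ∩ blockU E 0 j)) (hout : M.Indep (S \ blockU E 0 j))
    (hinCard : (S ∩ blockU E 0 j).ncard = blockSum a 0 j) : M.Indep S := by
  have hsplit := ncard_inter_add_ncard_sdiff_eq_ncard S (blockU E 0 j) hSfin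
  have hsum : blockSum a 0 j + blockSum a j t = ∑ i, a i := blockSum_add_blockSum
  rw [← inter_union_sdiff S (blockU E 0 j)]
  exact hP j hj hjt _ _ (restrict_indep_iff.2 ⟨hin, inter_subset_right⟩) hinCard.le
    (restrict_indep_iff.2 ⟨hout, sdiff_blockU_subset (hS.trans hE)⟩) (by omega)

lemma PrefixSuffixIndep.indep_blockU (hP : PrefixSuffixIndep M E a) (hI : ∀ i, M.Indep (I i))
    (hIE : ∀ i, I i ⊆ E i) (hIcard : ∀ i, (I i).ncard ≤ a i)
    (hcard : ∀ k ≤ t, (blockU I 0 k).ncard ≤ blockSum a 0 k) {k : ℕ} (hk : k ≤ t) :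
    M.Indep (blockU I 0 k) := by
  induction k with
  | zero => simp
  | succ k ih =>
    rw [blockU_succ hk]
    rcases k.eq_zero_or_pos with rfl | hk0
    · simpa using hI _
    refine hP k hk0 (by omega) _ _ (restrict_indep_iff.2 ⟨ih (by omega), blockU_subset_blockU hIE⟩)
      (hcard k (by omega)) (restrict_indep_iff.2 ⟨hI _, (hIE _).trans (subset_blockU le_rfl hk)⟩)
      ((hIcard _).trans (le_blockSum hk))

lemma PrefixSuffixIndep.exists_isBase_ncard_inter_blockU_eq [M.RankFinite]
    (hP : PrefixSuffixIndep M E a) (hd : Pairwise (Disjoint on E))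
    (ha : ∀ i, a i ≤ mrk (M ↾ E i)) (hr : mrk M = ∑ i, a i) :
    ∃ B, M.IsBase B ∧ ∀ h ≤ t, (B ∩ blockU E 0 h).ncard = blockSum a 0 h := by
  choose I hI hIcard using fun i => (M ↾ E i).exists_indep_ncard_eq (ha i)
  simp only [restrict_indep_iff] at hI
  have hIE (i : Fin t) : I i ⊆ E i := (hI i).2
  have hcard (k : ℕ) (hk : k ≤ t) : (blockU I 0 k).ncard = blockSum a 0 k := by
    rw [ncard_blockU (fun i j hij => (hd hij).mono (hIE i) (hIE j)) (fun i => (hI i).1.finite) hk]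
    simp only [hIcard]
  refine ⟨blockU I 0 t, (hP.indep_blockU (fun i => (hI i).1) hIE (fun i => (hIcard i).le)
    (fun k hk => (hcard k hk).le) le_rfl).isBase_of_mrk_le ?_, fun h hh => ?_⟩
  · rw [hcard t le_rfl, hr, ← blockSum_add_blockSum (j := t)]
    simp [blockSum]
  · rw [blockU_inter_blockU hd hIE, hcard h hh]

variable {j : ℕ} {B B' : Set α} {e f : α}

lemma insert_sdiff_mem_bFam [M.RankFinite] (hB : B ∈ BFam M E a j) (he : e ∈ B) (hf : f ∉ B)
    (hS : M.IsBase (insert f (B \ {e})))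
    (hlow : ∀ h, 1 ≤ h → h ≤ j - 1 → e ∈ blockU E 0 h → f ∉ blockU E 0 h →
      (B ∩ blockU E 0 h).ncard ≠ blockSum a 0 h)
    (hup : f ∈ blockU E 0 j → e ∉ blockU E 0 j → (B ∩ blockU E 0 j).ncard ≠ blockSum a 0 j) :
    insert f (B \ {e}) ∈ BFam M E a j := by
  obtain ⟨hBb, hBlow, hBup⟩ := hB
  refine ⟨hS, fun h h1 hh => ?_, ?_⟩
  · have hcount := ncard_insert_sdiff_inter_add (U := blockU E 0 h) hBb.finite he hf
    have hBh := hBlow h h1 hh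
    by_cases heU : e ∈ blockU E 0 h <;> by_cases hfU : f ∈ blockU E 0 h <;>
      simp only [heU, hfU, if_true, if_false] at hcount
    · omega
    · have := hlow h h1 hh heU hfU; omega
    · omega
    · omega
  · have hcount := ncard_insert_sdiff_inter_add (U := blockU E 0 j) hBb.finite he hf
    by_cases heU : e ∈ blockU E 0 j <;> by_cases hfU : f ∈ blockU E 0 j <;>
      simp only [heU, hfU, if_true, if_false] at hcount
    · omega
    · omega
    · have := hup hfU heU; omega
    · omega

lemma PrefixSuffixIndep.exists_exchange_of_tight_prefix [M.RankFinite]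
    (hP : PrefixSuffixIndep M E a) (hE : M.E ⊆ ⋃ i, E i) (hr : mrk M = ∑ i, a i) (hjt : j ≤ t)
    (hB : B ∈ BFam M E a j) (hB' : B' ∈ BFam M E a j) (he : e ∈ B) (heB' : e ∉ B') {m : ℕ}
    (hm : 1 ≤ m) (hmj : m ≤ j - 1) (hem : e ∈ blockU E 0 m)
    (htight : (B ∩ blockU E 0 m).ncard = blockSum a 0 m)
    (hmin : ∀ h < m, 1 ≤ h → e ∈ blockU E 0 h → (B ∩ blockU E 0 h).ncard ≠ blockSum a 0 h) :
    ∃ f ∈ B' \ B, insert f (B \ {e}) ∈ BFam M E a j := by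
  obtain ⟨f, hf, hfm, hin⟩ := hB.1.indep.exists_insert_sdiff_inter_indep hB'.1.indep ⟨he, hem⟩ heB'
    (htight ▸ hB'.2.1 m hm hmj)
  have hcount := ncard_insert_sdiff_inter_add (U := blockU E 0 m) hB.1.finite he hf.2
  simp only [hem, hfm, if_true] at hcount
  have hout : M.Indep (insert f (B \ {e}) \ blockU E 0 m) := by
    refine hB.1.indep.subset fun x ⟨hx, hxm⟩ => ?_
    rcases hx with rfl | ⟨hxB, -⟩
    · exact absurd hfm hxm
    · exact hxB
  have hS : M.IsBase (insert f (B \ {e})) := by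
    refine hB.1.exchange_isBase_of_indep hf.2 (hP.indep_of_inter_sdiff hE hm (by omega)
      (insert_subset (hB'.1.subset_ground hf.1) (sdiff_subset.trans hB.1.subset_ground))
      (hB.1.finite.sdiff.insert f) ?_ hin hout (by omega))
    rw [ncard_exchange hf.2 he, hB.1.ncard_eq_mrk_s2, hr]
  refine ⟨f, hf, insert_sdiff_mem_bFam hB he hf.2 hS (fun h h1 _ heh hfh => hmin h ?_ h1 heh)
    fun _ hej => (hej (blockU_mono_right (by omega) hem)).elim⟩
  exact lt_of_not_ge fun hmh => hfh (blockU_mono_right hmh hfm)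

lemma PrefixSuffixIndep.exists_exchange_of_tight_upper [M.RankFinite]
    (hP : PrefixSuffixIndep M E a) (hE : M.E ⊆ ⋃ i, E i) (hr : mrk M = ∑ i, a i) (hj : 1 ≤ j)
    (hB : B ∈ BFam M E a j) (hB' : B' ∈ BFam M E a j) (he : e ∈ B) (heB' : e ∉ B')
    (hej : e ∉ blockU E 0 j) (htight : (B ∩ blockU E 0 j).ncard = blockSum a 0 j) :
    ∃ f ∈ B' \ B, insert f (B \ {e}) ∈ BFam M E a j := by
  have hjt : j < t := by
    obtain ⟨i, ⟨hji, -⟩, -⟩ := mem_blockU.1 (sdiff_blockU_subset hE ⟨hB.1.subset_ground he, hej⟩)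
    exact hji.trans_lt i.isLt
  have hsplit := ncard_inter_add_ncard_sdiff_eq_ncard B (blockU E 0 j) hB.1.finite
  have hsplit' := ncard_inter_add_ncard_sdiff_eq_ncard B' (blockU E 0 j) hB'.1.finite
  have hBB' := hB.1.ncard_eq_ncard_of_isBase hB'.1
  obtain ⟨f, hf, hfj, hout⟩ := hB.1.indep.exists_insert_sdiff_inter_indep
    (U := (blockU E 0 j)ᶜ) hB'.1.indep ⟨he, hej⟩ heB'
    (by rw [← sdiff_eq, ← sdiff_eq]; have := hB'.2.2; omega)
  have hcount := ncard_insert_sdiff_inter_add (U := blockU E 0 j) hB.1.finite he hf.2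
  simp only [hej, show f ∉ blockU E 0 j from hfj, if_false] at hcount
  have hin : M.Indep (insert f (B \ {e}) ∩ blockU E 0 j) := by
    refine hB.1.indep.subset fun x ⟨hx, hxj⟩ => ?_
    rcases hx with rfl | ⟨hxB, -⟩
    · exact absurd hxj hfj
    · exact hxB
  have hS : M.IsBase (insert f (B \ {e})) := by
    refine hB.1.exchange_isBase_of_indep hf.2 (hP.indep_of_inter_sdiff hE hj (by omega)
      (insert_subset (hB'.1.subset_ground hf.1) (sdiff_subset.trans hB.1.subset_ground))
      (hB.1.finite.sdiff.insert f) ?_ hin (by rwa [sdiff_eq]) (by omega))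
    rw [ncard_exchange hf.2 he, hB.1.ncard_eq_mrk_s2, hr]
  exact ⟨f, hf, insert_sdiff_mem_bFam hB he hf.2 hS
    (fun h _ hh heh _ => (hej (blockU_mono_right (by omega) heh)).elim) fun hfj' => (hfj hfj').elim⟩

lemma exists_exchange_of_slack [M.RankFinite] (hB : B ∈ BFam M E a j) (hB' : B' ∈ BFam M E a j)
    (he : e ∈ B) (heB' : e ∉ B')
    (hlow : ∀ h, 1 ≤ h → h ≤ j - 1 → e ∈ blockU E 0 h → (B ∩ blockU E 0 h).ncard ≠ blockSum a 0 h)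
    (hup : e ∉ blockU E 0 j → (B ∩ blockU E 0 j).ncard ≠ blockSum a 0 j) :
    ∃ f ∈ B' \ B, insert f (B \ {e}) ∈ BFam M E a j := by
  obtain ⟨f, hf, hS⟩ := hB.1.exchange hB'.1 ⟨he, heB'⟩
  exact ⟨f, hf, insert_sdiff_mem_bFam hB he hf.2 hS (fun h h1 hh heh _ => hlow h h1 hh heh)
    fun _ => hup⟩

lemma PrefixSuffixIndep.exchangeProperty_bFam [M.RankFinite] (hP : PrefixSuffixIndep M E a)
    (hE : M.E ⊆ ⋃ i, E i) (hr : mrk M = ∑ i, a i) (hj : 1 ≤ j) (hjt : j ≤ t) :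
    ExchangeProperty (· ∈ BFam M E a j) := by
  rintro B B' hB hB' e ⟨he, heB'⟩
  by_cases hprefix : ∃ m, 1 ≤ m ∧ m ≤ j - 1 ∧ e ∈ blockU E 0 m ∧
      (B ∩ blockU E 0 m).ncard = blockSum a 0 m
  · classical
    obtain ⟨hm, hmj, hem, htight⟩ := Nat.find_spec hprefix
    exact hP.exists_exchange_of_tight_prefix hE hr hjt hB hB' he heB' hm hmj hem htight
      fun h hh h1 heh ht => Nat.find_min hprefix hh ⟨h1, by omega, heh, ht⟩
  by_cases hupper : e ∉ blockU E 0 j ∧ (B ∩ blockU E 0 j).ncard = blockSum a 0 j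
  · exact hP.exists_exchange_of_tight_upper hE hr hj hB hB' he heB' hupper.1 hupper.2
  simp only [not_exists, not_and] at hprefix
  exact exists_exchange_of_slack hB hB' he heB' hprefix fun hej ht => hupper ⟨hej, ht⟩

end GoodPartition

theorem statement2_general {α : Type*} {t : ℕ} (M : Matroid α) (hfin : M.E.Finite)
    (r : ℕ) (hrank : mrk M = r) (E : Fin t → Set α) (a : Fin t → ℕ)
    (hgood : IsGoodPartition M r E a) :
    ∀ j : ℕ, 1 ≤ j → j ≤ t → IsBaseCollection M.E (BFam M E a j) := by
  intro j hj hjt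
  obtain ⟨hE, hd, -, ha, hr, hP, -⟩ := hgood
  replace hP : PrefixSuffixIndep M E a := hP
  have : M.Finite := ⟨hfin⟩
  obtain ⟨B, hB, hBcard⟩ :=
    hP.exists_isBase_ncard_inter_blockU_eq hd (fun i => (ha i).2.le) (hrank.trans hr)
  have hBj : B ∈ BFam M E a j :=
    ⟨hB, fun h _ hh => (hBcard h (by omega)).ge, (hBcard j hjt).le⟩
  exact ⟨Matroid.ofIsBaseOfFinite hfin (· ∈ BFam M E a j) ⟨B, hBj⟩
    (hP.exchangeProperty_bFam hE.superset (hrank.trans hr) hj hjt) (fun B hB => hB.1.subset_ground),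
    rfl, fun B => Iff.rfl⟩

/-- for a good `t`-partition of `M`, each family `ℬ(M_j)` (for `1 ≤ j ≤ t`)
is the collection of bases of a matroid on `E`. -/
theorem statement2 {α : Type*} {t : ℕ} (ht : 2 ≤ t) (M : Matroid α) (hfin : M.E.Finite)
    (r : ℕ) (hrank : mrk M = r) (E : Fin t → Set α) (a : Fin t → ℕ)
    (hgood : IsGoodPartition M r E a) :
    ∀ j : ℕ, 1 ≤ j → j ≤ t → IsBaseCollection M.E (BFam M E a j) :=
  statement2_general M hfin r hrank E a hgood
end

section
/- Let n, r, t be integers with t ≥ 2, r ≥ t, and n ≥ r + t, and let p_1,…,p_t be integers with p_i ≥ 2 for all i and p_1 + ⋯ + p_t = n. Partition E = {1,…,n} into consecutive intervals E_1 = {1,…,p_1}, E_2 = {p_1+1,…,p_1+p_2}, …, E_t = {p_1+⋯+p_{t−1}+1,…,n}. Then there exist integers a_1,…,a_t with 0 < a_i < min(p_i, r) for each i such that E = E_1 ∪ ⋯ ∪ E_t together with a_1,…,a_t is a good t-partition of the uniform matroid U_{n,r}. -/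
open Matroid Set

/-!
The `a_i` only have to satisfy `0 < a_i < min (p_i, r)` and `∑ a_i = r`: in `U_{n,r}` a set is
independent iff it has at most `r` elements, so `|X ∪ Y ∪ Z| ≤ |X| + |Y| + |Z| ≤ ∑ a_i = r` gives
`(P2a)` and `(P2b)` for free, and `r(U|E_i) = min (p_i, r)`. Such `a_i` exist because
`t ≤ r ≤ ∑ (min (p_i, r) - 1)`: if all `p_i ≤ r` the right side is `n - t ≥ r`, otherwise one
term is already `r - 1` and each of the other `t - 1 ≥ 1` terms is at least `1`.
-/

theorem Finset.exists_le_le_sum_eq {ι : Type*} [DecidableEq ι] (s : Finset ι) (l u : ι → ℕ)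
    (hlu : ∀ i ∈ s, l i ≤ u i) {r : ℕ} (hl : ∑ i ∈ s, l i ≤ r) (hu : r ≤ ∑ i ∈ s, u i) :
    ∃ a : ι → ℕ, (∀ i ∈ s, l i ≤ a i ∧ a i ≤ u i) ∧ ∑ i ∈ s, a i = r := by
  induction s using Finset.induction_on generalizing r with
  | empty =>
    simp only [Finset.sum_empty, nonpos_iff_eq_zero] at hu
    exact ⟨l, by simp, by simp [hu]⟩
  | insert j s hj ih =>
    rw [Finset.sum_insert hj] at hl hu
    -- give `j` as much as possible while leaving enough for the lower bounds on `s`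
    obtain ⟨c, hc⟩ : ∃ c, c = min (u j) (r - ∑ i ∈ s, l i) := ⟨_, rfl⟩
    have hluj := hlu j (Finset.mem_insert_self j s)
    have hcl : ∑ i ∈ s, l i ≤ r - c := by omega
    have hlu_s := Finset.sum_le_sum fun i hi => hlu i (Finset.mem_insert_of_mem hi)
    have hcu : r - c ≤ ∑ i ∈ s, u i := by omega
    obtain ⟨a, ha, hsum⟩ := ih (fun i hi => hlu i (Finset.mem_insert_of_mem hi)) hcl hcu
    refine ⟨Function.update a j c, fun i hi => ?_, ?_⟩
    · rcases Finset.mem_insert.mp hi with rfl | hi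
      · simp only [Function.update_self]
        omega
      · rw [Function.update_of_ne (ne_of_mem_of_not_mem hi hj)]
        exact ha i hi
    · rw [Finset.sum_insert hj, Finset.sum_update_of_notMem hj, Function.update_self, hsum]
      omega

theorem le_sum_min_sub_one {ι : Type*} (s : Finset ι) (p : ι → ℕ) {r : ℕ} (hr : 2 ≤ r)
    (hs : 2 ≤ s.card) (hp : ∀ i ∈ s, 2 ≤ p i) (hsum : r + s.card ≤ ∑ i ∈ s, p i) :
    r ≤ ∑ i ∈ s, (min (p i) r - 1) := by
  classical
  by_cases hle : ∀ i ∈ s, p i ≤ r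
  · have hpred : ∑ i ∈ s, (min (p i) r - 1) + s.card = ∑ i ∈ s, p i := by
      rw [Finset.card_eq_sum_ones, ← Finset.sum_add_distrib]
      refine Finset.sum_congr rfl fun i hi => ?_
      have := hle i hi
      have := hp i hi
      omega
    omega
  · obtain ⟨j, hj, hjr⟩ : ∃ j ∈ s, r < p j := by simpa using hle
    have hrest : s.card - 1 ≤ ∑ i ∈ s.erase j, (min (p i) r - 1) := by
      rw [← Finset.card_erase_of_mem hj, Finset.card_eq_sum_ones]
      refine Finset.sum_le_sum fun i hi => ?_
      have := hp i (Finset.mem_of_mem_erase hi)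
      omega
    rw [← Finset.add_sum_erase s _ hj]
    omega

section IntervalBlocks

variable {t : ℕ} (p : Fin t → ℕ)

def prefixSum (j : ℕ) : ℕ :=
  ∑ l ∈ Finset.univ.filter (fun l : Fin t => (l : ℕ) < j), p l

theorem prefixSum_zero : prefixSum p 0 = 0 := by
  simp [prefixSum]

theorem prefixSum_of_le {j : ℕ} (hj : t ≤ j) : prefixSum p j = ∑ i, p i := by
  rw [prefixSum, Finset.filter_true_of_mem fun i _ => i.isLt.trans_le hj]

theorem prefixSum_succ (i : Fin t) : prefixSum p (i + 1) = prefixSum p i + p i := by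
  have h : Finset.univ.filter (fun l : Fin t => (l : ℕ) < i + 1)
      = insert i (Finset.univ.filter (fun l : Fin t => (l : ℕ) < i)) := by
    ext l
    simp only [Finset.mem_filter, Finset.mem_univ, true_and, Finset.mem_insert, Fin.ext_iff]
    omega
  rw [prefixSum, h, Finset.sum_insert (by simp), add_comm, prefixSum]

theorem prefixSum_mono : Monotone (prefixSum p) := fun _ _ hjk =>
  Finset.sum_le_sum_of_subset <| Finset.monotone_filter_right _ fun _ _ hl => hl.trans_le hjk

theorem exists_prefixSum_le_lt {x : ℕ} (hx : x < ∑ i, p i) :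
    ∃ i : Fin t, prefixSum p i ≤ x ∧ x < prefixSum p (i + 1) := by
  suffices ∀ m ≤ t, x < prefixSum p m → ∃ i : Fin t, prefixSum p i ≤ x ∧ x < prefixSum p (i + 1)
    from this t le_rfl (by rwa [prefixSum_of_le p le_rfl])
  intro m
  induction m with
  | zero => simp [prefixSum_zero]
  | succ m ih =>
    intro hm hxm
    by_cases hmx : prefixSum p m ≤ x
    · exact ⟨⟨m, hm⟩, hmx, hxm⟩
    · exact ih (by omega) (by omega)

def intervalBlock (n : ℕ) (i : Fin t) : Set (Fin n) :=
  Fin.val ⁻¹' Ico (prefixSum p i) (prefixSum p (i + 1))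

theorem pairwise_disjoint_intervalBlock (n : ℕ) :
    Pairwise (Function.onFun Disjoint (intervalBlock p n)) := by
  have key : ∀ i j : Fin t, i < j → Disjoint (intervalBlock p n i) (intervalBlock p n j) := by
    intro i j hij
    refine Set.disjoint_left.mpr fun x hxi hxj => ?_
    have := prefixSum_mono p (show (i : ℕ) + 1 ≤ j from hij)
    simp only [intervalBlock, mem_preimage, mem_Ico] at hxi hxj
    omega
  intro i j hij
  rcases hij.lt_or_gt with h | h
  · exact key i j h
  · exact (key j i h).symm

theorem iUnion_intervalBlock {n : ℕ} (hsum : ∑ i, p i = n) :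
    ⋃ i, intervalBlock p n i = univ := by
  refine eq_univ_of_forall fun x => mem_iUnion.mpr ?_
  exact exists_prefixSum_le_lt p (hsum ▸ x.isLt)

theorem ncard_intervalBlock {n : ℕ} (hsum : ∑ i, p i ≤ n) (i : Fin t) :
    (intervalBlock p n i).ncard = p i := by
  have hle : prefixSum p (i + 1) ≤ n :=
    (prefixSum_mono p i.isLt).trans ((prefixSum_of_le p le_rfl).trans_le hsum)
  rw [intervalBlock, ncard_preimage_of_injective_subset_range Fin.val_injective, ncard_Ico_nat,
    prefixSum_succ]
  · omega
  · intro y hy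
    exact ⟨⟨y, by simp only [mem_Ico] at hy; omega⟩, rfl⟩

end IntervalBlocks

theorem blockSum_add {t : ℕ} (a : Fin t → ℕ) {lo mid hi : ℕ} (h₁ : lo ≤ mid) (h₂ : mid ≤ hi) :
    blockSum a lo mid + blockSum a mid hi = blockSum a lo hi := by
  rw [blockSum, blockSum, ← Finset.sum_union, blockSum]
  · congr 1
    ext i
    simp only [Finset.mem_filter, Finset.mem_univ, true_and, Finset.mem_union]
    omega
  · refine Finset.disjoint_filter.mpr fun i _ hi hi' => ?_
    omega

theorem blockSum_zero_eq_sum {t : ℕ} (a : Fin t → ℕ) : blockSum a 0 t = ∑ i, a i := by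
  rw [blockSum, Finset.filter_true_of_mem fun i _ => ⟨i.val.zero_le, i.isLt⟩]

section Matroid

variable {α : Type*} {M : Matroid α} {r : ℕ}

theorem Matroid.indep_iff_ncard_le_of_isBase_iff [Finite α]
    (hB : ∀ B, M.IsBase B ↔ B.ncard = r) (hr : r ≤ Nat.card α) (I : Set α) :
    M.Indep I ↔ I.ncard ≤ r := by
  refine ⟨fun hI => ?_, fun hI => ?_⟩
  · obtain ⟨B, hB', hIB⟩ := hI.exists_isBase_superset
    exact (hB B).mp hB' ▸ ncard_le_ncard hIB
  · obtain ⟨B, hIB, -, hBr⟩ := exists_subsuperset_card_eq (subset_univ I) hI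
      (by rwa [ncard_univ])
    exact ((hB B).mpr hBr).indep.subset hIB

theorem ncard_le_mrk [Finite α] {I : Set α} (hI : M.Indep I) : I.ncard ≤ mrk M :=
  le_csSup ⟨Nat.card α, by rintro _ ⟨J, -, rfl⟩; exact ncard_le_card J⟩ ⟨I, hI, rfl⟩

theorem min_ncard_le_mrk_restrict [Finite α] (hI : ∀ I, M.Indep I ↔ I.ncard ≤ r) (X : Set α) :
    min X.ncard r ≤ mrk (M ↾ X) := by
  obtain ⟨Y, hYX, hY⟩ := exists_subset_card_eq (min_le_left X.ncard r)
  exact hY ▸ ncard_le_mrk ((restrict_indep_iff).mpr ⟨(hI Y).mpr (hY ▸ min_le_right _ _), hYX⟩)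

theorem isGoodPartition_of_indep_iff {t : ℕ} (hI : ∀ I, M.Indep I ↔ I.ncard ≤ r)
    (E : Fin t → Set α) (a : Fin t → ℕ) (hcover : ⋃ i, E i = M.E)
    (hdisj : Pairwise (Function.onFun Disjoint E)) (ha : ∀ i, 0 < a i ∧ a i < mrk (M ↾ E i))
    (hsum : ∑ i, a i = r) : IsGoodPartition M r E a := by
  refine ⟨hcover, hdisj, fun i => by have := ha i; omega, ha, hsum.symm, ?_, ?_⟩
  · intro j _ hjt X Y _ hX _ hY
    have hsplit := blockSum_add a (Nat.zero_le j) (show j ≤ t by omega)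
    have := ncard_union_le X Y
    rw [blockSum_zero_eq_sum] at hsplit
    exact (hI _).mpr (by omega)
  · intro j k _ hjk hkt X Y Z _ hX _ hY _ hZ
    have hsplit₁ := blockSum_add a (Nat.zero_le j) hjk.le
    have hsplit₂ := blockSum_add a (Nat.zero_le k) (show k ≤ t by omega)
    have := ncard_union_le (X ∪ Y) Z
    have := ncard_union_le X Y
    rw [blockSum_zero_eq_sum] at hsplit₂
    exact (hI _).mpr (by omega)

end Matroid

/-- the consecutive-interval partition of `{1, …, n}` into blocks of sizes
`p_1, …, p_t` admits integers `a_i` with `0 < a_i < min (p_i, r)` making it a good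
`t`-partition of the uniform matroid `U_{n,r}`. -/
theorem statement8 (n r t : ℕ) (ht : 2 ≤ t) (hrt : t ≤ r) (hn : r + t ≤ n)
    (p : Fin t → ℕ) (hp : ∀ i, 2 ≤ p i) (hsum : ∑ i, p i = n)
    (U : Matroid (Fin n)) (hUE : U.E = Set.univ)
    (hUB : ∀ B : Set (Fin n), U.IsBase B ↔ B.ncard = r)
    (E : Fin t → Set (Fin n))
    (hE : ∀ i : Fin t, E i = {x : Fin n |
      (∑ l ∈ Finset.univ.filter (fun l : Fin t => (l : ℕ) < (i : ℕ)), p l) ≤ (x : ℕ) ∧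
      (x : ℕ) < ∑ l ∈ Finset.univ.filter (fun l : Fin t => (l : ℕ) ≤ (i : ℕ)), p l}) :
    ∃ a : Fin t → ℕ, (∀ i, 0 < a i ∧ a i < min (p i) r) ∧
      IsGoodPartition U r E a := by
  have hI := U.indep_iff_ncard_le_of_isBase_iff hUB (by rw [Nat.card_fin]; omega)
  obtain rfl : E = intervalBlock p n := funext fun i => by
    simp only [hE i, intervalBlock, prefixSum, Nat.lt_succ_iff]
    rfl
  obtain ⟨a, ha, hasum⟩ := Finset.univ.exists_le_le_sum_eq (fun _ => 1)
    (fun i => min (p i) r - 1) (fun i _ => by have := hp i; omega) (by simpa using hrt)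
    (le_sum_min_sub_one _ p (ht.trans hrt) (by simpa using ht) (fun i _ => hp i)
      (by simpa [hsum] using hn))
  have hmrk (i : Fin t) : min (p i) r ≤ mrk (U ↾ intervalBlock p n i) :=
    ncard_intervalBlock p hsum.le i ▸ min_ncard_le_mrk_restrict hI _
  have hbounds (i : Fin t) : 0 < a i ∧ a i < min (p i) r := by
    have := ha i (Finset.mem_univ i)
    have := hp i
    omega
  refine ⟨a, hbounds, isGoodPartition_of_indep_iff hI _ a ?_ (pairwise_disjoint_intervalBlock p n)
    (fun i => ⟨(hbounds i).1, (hbounds i).2.trans_le (hmrk i)⟩) hasum⟩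
  rw [hUE, iUnion_intervalBlock p hsum]
end

section
/- Let M be a matroid of rank r on E, let E = E_1 ∪ ⋯ ∪ E_t (t ≥ 2) be a good t-partition of M with integers a_1,…,a_t, and let X ⊂ E be a subset of M that is simultaneously a circuit and a hyperplane (a flat of rank r−1) of M. Let M' be the relaxation of M, i.e., the matroid on E whose collection of bases is B(M) ∪ {X}. Then E = E_1 ∪ ⋯ ∪ E_t together with the same integers a_1,…,a_t is a good t-partition of M'. -/
open Matroid Set

/-- `X` is a circuit of the matroid `M` : a dependent subset of the ground set all of whose
proper subsets are independent. -/
def IsCircuitOf {α : Type*} (M : Matroid α) (X : Set α) : Prop :=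
  X ⊆ M.E ∧ ¬ M.Indep X ∧ ∀ Y, Y ⊂ X → M.Indep Y
/-! Relaxing a circuit-hyperplane `X` only adds `X` itself as a new independent set, and `X` has
`r` elements. Every set occurring in `(P2a)` or `(P2b)` lies below a partial sum of the `a_i` that
omits some `a_i > 0`, hence has fewer than `r` elements; so these sets, and the rank
conditions on the blocks, transfer from `M` to the relaxation unchanged. -/

section

variable {α : Type*}

lemma mrk_le_mrk {N N' : Matroid α} (h : ∀ I, N.Indep I → N'.Indep I) (hfin : N'.E.Finite) :
    mrk N ≤ mrk N' := by
  apply csSup_le_csSup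
  · exact ⟨N'.E.ncard, fun n ⟨I, hI, hn⟩ => hn ▸ ncard_le_ncard hI.subset_ground hfin⟩
  · exact ⟨0, ∅, N.empty_indep, ncard_empty α⟩
  · rintro n ⟨I, hI, hn⟩
    exact ⟨I, h I hI, hn⟩

lemma IsCircuitOf.nonempty {M : Matroid α} {X : Set α} (hX : IsCircuitOf M X) : X.Nonempty :=
  nonempty_iff_ne_empty.2 fun h => hX.2.1 (h ▸ M.empty_indep)

lemma IsCircuitOf.mrk_restrict_add_one {M : Matroid α} {X : Set α} (hX : IsCircuitOf M X)
    (hXfin : X.Finite) : mrk (M ↾ X) + 1 = X.ncard := by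
  obtain ⟨x, hx⟩ := hX.nonempty
  have hpos : 0 < X.ncard := (ncard_pos hXfin).2 ⟨x, hx⟩
  suffices mrk (M ↾ X) = X.ncard - 1 by omega
  refine IsGreatest.csSup_eq ⟨⟨X \ {x}, ?_, ncard_sdiff_singleton_of_mem hx⟩, ?_⟩
  · exact restrict_indep_iff.2 ⟨hX.2.2 _ (sdiff_singleton_ssubset.2 hx), sdiff_subset⟩
  · rintro n ⟨I, hI, rfl⟩
    rw [restrict_indep_iff] at hI
    have hIX : I ⊂ X := hI.2.ssubset_of_ne (by rintro rfl; exact hX.2.1 hI.1)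
    have := ncard_lt_ncard hIX hXfin
    omega

section Relaxation

variable {M M' : Matroid α} {X : Set α}

lemma indep_relaxation_iff (hX : ∀ Y, Y ⊂ X → M.Indep Y)
    (hM' : ∀ B, M'.IsBase B ↔ (M.IsBase B ∨ B = X)) (I : Set α) :
    M'.Indep I ↔ M.Indep I ∨ I = X := by
  refine ⟨fun hI => ?_, ?_⟩
  · obtain ⟨B, hB, hIB⟩ := hI.exists_isBase_superset
    rcases (hM' B).1 hB with hBM | rfl
    · exact Or.inl (hBM.indep.subset hIB)
    · exact (eq_or_ne I B).elim Or.inr fun hne => Or.inl (hX I (hIB.ssubset_of_ne hne))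
  · rintro (hI | rfl)
    · obtain ⟨B, hB, hIB⟩ := hI.exists_isBase_superset
      exact ((hM' B).2 (Or.inl hB)).indep.subset hIB
    · exact ((hM' I).2 (Or.inr rfl)).indep

lemma restrict_indep_of_relaxation_of_ncard_lt (hX : ∀ Y, Y ⊂ X → M.Indep Y)
    (hM' : ∀ B, M'.IsBase B ↔ (M.IsBase B ∨ B = X)) {S Y : Set α} (hY : (M' ↾ S).Indep Y)
    (hYX : Y.ncard < X.ncard) : (M ↾ S).Indep Y := by
  rw [restrict_indep_iff] at hY ⊢
  refine ⟨((indep_relaxation_iff hX hM' Y).1 hY.1).resolve_right ?_, hY.2⟩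
  rintro rfl
  exact hYX.false

end Relaxation

lemma blockSum_lt_sum {t : ℕ} {a : Fin t → ℕ} (hpos : ∀ i, 0 < a i) {lo hi : ℕ} (i : Fin t)
    (hi_not : ¬ (lo ≤ (i : ℕ) ∧ (i : ℕ) < hi)) : blockSum a lo hi < ∑ i, a i := by
  apply Finset.sum_lt_sum_of_subset (Finset.subset_univ _) (Finset.mem_univ i) _ (hpos i)
  · exact fun _ _ _ => Nat.zero_le _
  · simp [hi_not]

end

theorem statement10_general {α : Type*} {t : ℕ} (M : Matroid α) (hfin : M.E.Finite)
    (r : ℕ) (E : Fin t → Set α) (a : Fin t → ℕ)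
    (hgood : IsGoodPartition M r E a)
    (X : Set α) (hXcirc : IsCircuitOf M X)
    (hXrk : mrk (M ↾ X) = r - 1)
    (M' : Matroid α) (hM'E : M'.E = M.E)
    (hM' : ∀ B, M'.IsBase B ↔ (M.IsBase B ∨ B = X)) :
    IsGoodPartition M' r E a := by
  obtain ⟨hU, hdisj, hrkE, ha, hr, hP2a, hP2b⟩ := hgood
  have hrX : r ≤ X.ncard := by
    have := hXcirc.mrk_restrict_add_one (hfin.subset hXcirc.1)
    omega
  have hpull : ∀ {S Y : Set α} {lo hi : ℕ} (i : ℕ) (hit : i < t), ¬ (lo ≤ i ∧ i < hi) →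
      (M' ↾ S).Indep Y → Y.ncard ≤ blockSum a lo hi → (M ↾ S).Indep Y :=
    fun i hit hi hY hYc => restrict_indep_of_relaxation_of_ncard_lt hXcirc.2.2 hM' hY <| by
      have := blockSum_lt_sum (fun i => (ha i).1) ⟨i, hit⟩ hi
      omega
  have hpush : ∀ {I}, M.Indep I → M'.Indep I :=
    fun hI => (indep_relaxation_iff hXcirc.2.2 hM' _).2 (Or.inl hI)
  have hmrk : ∀ i, mrk (M ↾ E i) ≤ mrk (M' ↾ E i) := fun i =>
    mrk_le_mrk (fun I hI => restrict_indep_iff.2 ⟨hpush (restrict_indep_iff.1 hI).1,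
      (restrict_indep_iff.1 hI).2⟩) (hfin.subset (hU ▸ subset_iUnion E i))
  refine ⟨hM'E ▸ hU, hdisj, fun i => (hrkE i).trans_le (hmrk i),
    fun i => ⟨(ha i).1, (ha i).2.trans_le (hmrk i)⟩, hr, ?_, ?_⟩
  · intro j hj hjt Y Z hY hYc hZ hZc
    exact hpush <| hP2a j hj hjt Y Z
      (hpull j (by omega) (by omega) hY hYc) hYc
      (hpull 0 (by omega) (by omega) hZ hZc) hZc
  · intro j k hj hjk hkt Y Z W hY hYc hZ hZc hW hWc
    exact hpush <| hP2b j k hj hjk hkt Y Z W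
      (hpull j (by omega) (by omega) hY hYc) hYc
      (hpull 0 (by omega) (by omega) hZ hZc) hZc
      (hpull 0 (by omega) (by omega) hW hWc) hWc

/-- a good `t`-partition of `M` is also a good `t`-partition of the
relaxation `M'` of `M` at a circuit-hyperplane `X`. -/
theorem statement10 {α : Type*} {t : ℕ} (ht : 2 ≤ t) (M : Matroid α) (hfin : M.E.Finite)
    (r : ℕ) (hrank : mrk M = r) (E : Fin t → Set α) (a : Fin t → ℕ)
    (hgood : IsGoodPartition M r E a)
    (X : Set α) (hXss : X ⊂ M.E) (hXcirc : IsCircuitOf M X)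
    (hXflat : M.IsFlat X) (hXrk : mrk (M ↾ X) = r - 1)
    (M' : Matroid α) (hM'E : M'.E = M.E)
    (hM' : ∀ B, M'.IsBase B ↔ (M.IsBase B ∨ B = X)) :
    IsGoodPartition M' r E a :=
  statement10_general M hfin r E a hgood X hXcirc hXrk M' hM'E hM'
end

section
/- Let M be a matroid of rank 3 on a finite set E and let E = E_1 ∪ E_2 be a partition of E into two disjoint sets such that: (1) r(M|E_1) ≥ 2 and r(M|E_2) = 3; and (2) for every line l of M (a flat of M of rank 2), if l ∩ E_1 ≠ ∅ then |l ∩ E_2| ≤ 1. Then E = E_1 ∪ E_2 together with the integers a_1 = 1 and a_2 = 2 is a good 2-partition of M. -/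
open Matroid Set

/-! If a point `x ∈ E₁` lay in the closure of an independent `Y ⊆ E₂` with `|Y| ≤ 2`, then, since
`r(E₂) ≥ 2`, `Y` extends inside `E₂` to an independent pair `Z`; the closure of `Z` is a line
through `x` meeting `E₂` in at least two points. -/

namespace Matroid

variable {α : Type*} {M : Matroid α}

lemma cast_mrk_eq_eRank (M : Matroid α) [M.RankFinite] : (mrk M : ℕ∞) = M.eRank := by
  obtain ⟨B, hB⟩ := M.exists_isBase
  have hgreatest : IsGreatest {n : ℕ | ∃ I, M.Indep I ∧ I.ncard = n} B.ncard := by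
    refine ⟨⟨B, hB.indep, rfl⟩, ?_⟩
    rintro _ ⟨I, hI, rfl⟩
    rw [← Nat.cast_le (α := ℕ∞), hI.finite.cast_ncard_eq, hB.finite.cast_ncard_eq,
      hB.encard_eq_eRank]
    exact hI.encard_le_eRank
  rw [mrk, hgreatest.csSup_eq, hB.finite.cast_ncard_eq, hB.encard_eq_eRank]

lemma cast_mrk_restrict [M.RankFinite] (X : Set α) : (mrk (M ↾ X) : ℕ∞) = M.eRk X :=
  cast_mrk_eq_eRank (M ↾ X)

lemma Indep.exists_indep_superset_encard_eq {X Y : Set α} {n : ℕ∞} (hY : M.Indep Y)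
    (hYX : Y ⊆ X) (hYn : Y.encard ≤ n) (hnX : n ≤ M.eRk X) :
    ∃ Z, Y ⊆ Z ∧ Z ⊆ X ∧ M.Indep Z ∧ Z.encard = n := by
  obtain ⟨J, hJ, hYJ⟩ := hY.subset_isBasis'_of_subset hYX
  obtain ⟨Z, hYZ, hZJ, hZn⟩ :=
    exists_superset_subset_encard_eq hYJ hYn (hJ.encard_eq_eRk ▸ hnX)
  exact ⟨Z, hYZ, hZJ.trans hJ.subset, hJ.indep.subset hZJ, hZn⟩

lemma Indep.insert_indep_of_forall_line {E₁ E₂ Y : Set α} {x : α}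
    (hE₂ : 2 ≤ M.eRk E₂)
    (hline : ∀ l, M.IsFlat l → M.eRk l = 2 → (l ∩ E₁).Nonempty → (l ∩ E₂).encard ≤ 1)
    (hY : M.Indep Y) (hYE₂ : Y ⊆ E₂) (hY2 : Y.encard ≤ 2) (hxE₁ : x ∈ E₁) (hxE : x ∈ M.E) :
    M.Indep (insert x Y) := by
  by_contra hdep
  have hxY : x ∈ M.closure Y := by
    by_contra hxY
    exact hdep (hY.insert_indep_iff.2 (Or.inl ⟨hxE, hxY⟩))
  obtain ⟨Z, hYZ, hZE₂, hZ, hZ2⟩ := hY.exists_indep_superset_encard_eq hYE₂ hY2 hE₂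
  have hlE₂ : 2 ≤ (M.closure Z ∩ E₂).encard :=
    hZ2 ▸ encard_le_encard (subset_inter (M.subset_closure Z) hZE₂)
  have hl := hline (M.closure Z) (M.isFlat_closure Z)
    (by rw [eRk_closure_eq, hZ.eRk_eq_encard, hZ2]) ⟨x, M.closure_subset_closure hYZ hxY, hxE₁⟩
  exact absurd (hlE₂.trans hl) (by norm_num)

end Matroid

theorem statement11_general {α : Type*} (M : Matroid α) (hfin : M.E.Finite)
    (E₁ E₂ : Set α) (hpart : E₁ ∪ E₂ = M.E) (hdisj : Disjoint E₁ E₂)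
    (h1 : 2 ≤ mrk (M ↾ E₁)) (h2 : mrk (M ↾ E₂) = 3)
    (hline : ∀ l : Set α, M.IsFlat l → mrk (M ↾ l) = 2 →
      (l ∩ E₁).Nonempty → (l ∩ E₂).ncard ≤ 1) :
    IsGoodPartition2 M 3 E₁ E₂ 1 2 := by
  have : M.Finite := ⟨hfin⟩
  have hE₂ : 2 ≤ M.eRk E₂ := by rw [← cast_mrk_restrict, h2]; norm_num
  have hline' : ∀ l, M.IsFlat l → M.eRk l = 2 → (l ∩ E₁).Nonempty → (l ∩ E₂).encard ≤ 1 := by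
    intro l hl hl2 hlE₁
    rw [← (M.set_finite _ (inter_subset_left.trans hl.subset_ground)).cast_ncard_eq]
    exact_mod_cast hline l hl (by exact_mod_cast (cast_mrk_restrict l).trans hl2) hlE₁
  refine ⟨hpart, hdisj, by omega, by omega, by omega, by omega, by omega, by omega, by omega,
    fun X Y hX hX1 hY hY2 => ?_⟩
  rw [restrict_indep_iff] at hX hY
  obtain rfl | ⟨x, rfl⟩ := (ncard_le_one_iff_eq hX.1.finite).1 hX1
  · simpa using hY.1
  rw [singleton_union]
  refine hY.1.insert_indep_of_forall_line hE₂ hline' hY.2 ?_ (hX.2 rfl) (hpart ▸ Or.inl (hX.2 rfl))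
  rw [← hY.1.finite.cast_ncard_eq]
  exact_mod_cast hY2

/-- geometric sufficient conditions for a rank-3 matroid : if
`r(M|E₁) ≥ 2`, `r(M|E₂) = 3` and every line (rank-2 flat) of `M` meeting `E₁` meets `E₂`
in at most one point, then `E₁ ∪ E₂` with `a₁ = 1`, `a₂ = 2` is a good 2-partition of `M`. -/
theorem statement11 {α : Type*} (M : Matroid α) (hfin : M.E.Finite) (hrank : mrk M = 3)
    (E₁ E₂ : Set α) (hpart : E₁ ∪ E₂ = M.E) (hdisj : Disjoint E₁ E₂)
    (h1 : 2 ≤ mrk (M ↾ E₁)) (h2 : mrk (M ↾ E₂) = 3)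
    (hline : ∀ l : Set α, M.IsFlat l → mrk (M ↾ l) = 2 →
      (l ∩ E₁).Nonempty → (l ∩ E₂).ncard ≤ 1) :
    IsGoodPartition2 M 3 E₁ E₂ 1 2 :=
  statement11_general M hfin E₁ E₂ hpart hdisj h1 h2 hline
end
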